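/- Let F be a twisting cocycle for the Hopf algebra H and let A be a left H-module algebra. On the k-vector space A⊗H define two bilinear multiplications: the smash product m((a⊗h),(b⊗k)) := Σ a·(h⁽¹⁾•b) ⊗ h⁽²⁾k, and the twisted smash product m̃((a⊗h),(b⊗k)) := Σ (a ∗ (h⁽¹̃⁾•b)) ⊗ h⁽²̃⁾k, where a∗b := Σ (F₁•a)(F₂•b) and Δ̃(h) = Σ h⁽¹̃⁾⊗h⁽²̃⁾. Then the k-linear map Φ: A⊗H → A⊗H given by Φ(a⊗h) := Σ (F₁•a) ⊗ F₂h is bijective and multiplicative: Φ(m̃(x,y)) = m(Φ(x),Φ(y)) for all x,y ∈ A⊗H, and Φ(1⊗1) = 1⊗1. -/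

import Mathlib

/-!
Write `Ψ : H ⊗ H → End(A ⊗ H)`, `Ψ X (a ⊗ h) = Σ X₁ • a ⊗ X₂ h`; it is an algebra map and
`Φ = Ψ F`, so `Φ` is invertible with inverse `Ψ F⁻¹`. Evaluated at `a ⊗ h` and `y`, both
`Φ (m̃ (a ⊗ h) y)` and `m (Φ (a ⊗ h)) (Φ y)` are obtained by letting an element of `H ⊗ H ⊗ H`
act on `a ⊗ y ∈ A ⊗ (A ⊗ H)` and then multiplying the two `A`-factors: the elements are
`(Δ ⊗ id)(F) (F ⊗ 1) (1 ⊗ Δ̃ h)` (here the module-algebra axiom moves `Φ` past the product) and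
`(id ⊗ Δ)(F) (1 ⊗ Δ(h) F)`, which agree by the cocycle identity since `F Δ̃(h) = Δ(h) F`.
Unitality is the counit condition `(ε ⊗ id)(F) = 1`.
-/

open TensorProduct

noncomputable section

variable (k : Type*) [Field k] (H : Type*) [Ring H] [HopfAlgebra k H]

/-- The comultiplication of `H` as a linear map. -/
noncomputable def comulL : H →ₗ[k] H ⊗[k] H := Coalgebra.comul

/-- The counit of `H` as a linear map. -/
noncomputable def counitL : H →ₗ[k] k := Coalgebra.counit

/-- The antipode of `H`. -/
noncomputable def anti : H →ₗ[k] H := HopfAlgebra.antipode (R := k)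

/-- `F` together with its inverse `Finv` is a twisting (Drinfeld) cocycle:
`F` is invertible, `(Δ⊗id)(F)·(F⊗1) = (id⊗Δ)(F)·(1⊗F)` and `(ε⊗id)(F) = 1 = (id⊗ε)(F)`. -/
def IsCocycle (F Finv : H ⊗[k] H) : Prop :=
  F * Finv = 1 ∧ Finv * F = 1 ∧
  (TensorProduct.assoc k H H H) ((TensorProduct.map (comulL k H) LinearMap.id F) * (F ⊗ₜ 1))
    = (TensorProduct.map LinearMap.id (comulL k H) F) * ((1 : H) ⊗ₜ F) ∧
  (TensorProduct.lid k H) (TensorProduct.map (counitL k H) LinearMap.id F) = 1 ∧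
  (TensorProduct.rid k H) (TensorProduct.map LinearMap.id (counitL k H) F) = 1

/-- `ϑ = Σ γ(F₁)F₂`. -/
noncomputable def theta (F : H ⊗[k] H) : H :=
  LinearMap.mul' k H (TensorProduct.map (anti k H) LinearMap.id F)

/-- `ζ = Σ F̄₂ γ⁻¹(F̄₁)`, where `γinv` is the inverse of the antipode and `Finv = Σ F̄₁⊗F̄₂`. -/
noncomputable def zeta (γinv : H →ₗ[k] H) (Finv : H ⊗[k] H) : H :=
  LinearMap.mul' k H (TensorProduct.map LinearMap.id γinv ((TensorProduct.comm k H H) Finv))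

/-- `R` (with inverse `Rinv`) is a triangular structure: `R` is invertible,
`R Δ(h) = Δᵒᵖ(h) R`, the two hexagon identities `(Δ⊗id)(R) = R₁₃R₂₃`,
`(id⊗Δ)(R) = R₁₃R₁₂` hold, and `R₂₁ R = 1`. -/
def IsTriangular (R Rinv : H ⊗[k] H) : Prop :=
  R * Rinv = 1 ∧ Rinv * R = 1 ∧
  (∀ h : H, R * comulL k H h = (TensorProduct.comm k H H) (comulL k H h) * R) ∧
  (TensorProduct.assoc k H H H) (TensorProduct.map (comulL k H) LinearMap.id R)
    = (TensorProduct.map LinearMap.id (TensorProduct.mk k H H 1) R) * ((1 : H) ⊗ₜ R) ∧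
  (TensorProduct.map LinearMap.id (comulL k H) R)
    = (TensorProduct.map LinearMap.id (TensorProduct.mk k H H 1) R) *
      ((TensorProduct.assoc k H H H) (R ⊗ₜ (1 : H))) ∧
  ((TensorProduct.comm k H H) R) * R = 1

/-- `bcomp U V x y = (U x) ∘ₗ (V y)`, bilinearly in `x, y`. -/
noncomputable def bcomp {A B C : Type*} [AddCommMonoid A] [AddCommMonoid B] [AddCommMonoid C]
    [Module k A] [Module k B] [Module k C]
    (U : H →ₗ[k] B →ₗ[k] C) (V : H →ₗ[k] A →ₗ[k] B) : H →ₗ[k] H →ₗ[k] (A →ₗ[k] C) :=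
  ((((LinearMap.llcomp k A B C) ∘ₗ U).flip) ∘ₗ V).flip

/-- Given an action `α` of `H` on `M`, the induced action of `H ⊗ H` on `M ⊗ M`:
`pairAct α (x ⊗ y) (a ⊗ b) = (α x a) ⊗ (α y b)`. -/
noncomputable def pairAct {M : Type*} [AddCommMonoid M] [Module k M]
    (α : H →ₗ[k] M →ₗ[k] M) : H ⊗[k] H →ₗ[k] (M ⊗[k] M →ₗ[k] M ⊗[k] M) :=
  (TensorProduct.homTensorHomMap (RingHom.id k) M M M M) ∘ₗ (TensorProduct.map α α)

/-- `sandwich α β (x ⊗ y) a = α x * a * β y`. -/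
noncomputable def sandwich {E : Type*} [Ring E] [Algebra k E]
    (α β : H →ₗ[k] E) : H ⊗[k] H →ₗ[k] E →ₗ[k] E :=
  TensorProduct.lift (bcomp k H ((LinearMap.mul k E) ∘ₗ α) ((LinearMap.mul k E).flip ∘ₗ β))

/-- The adjoint action associated with `ρ : H →ₗ E`:
`adAct ρ h a = Σ ρ(h⁽¹⁾) a ρ(γ(h⁽²⁾))`. -/
noncomputable def adAct {E : Type*} [Ring E] [Algebra k E]
    (ρ : H →ₗ[k] E) : H →ₗ[k] E →ₗ[k] E :=
  (sandwich k H ρ (ρ ∘ₗ anti k H)) ∘ₗ comulL k H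

/-- The twisted comultiplication `Δ̃(h) = F⁻¹ Δ(h) F`. -/
noncomputable def comulTw (F Finv : H ⊗[k] H) : H →ₗ[k] H ⊗[k] H :=
  (LinearMap.mulRight k F) ∘ₗ (LinearMap.mulLeft k Finv) ∘ₗ comulL k H

/-- The twisted antipode `γ̃(h) = ϑ⁻¹ γ(h) ϑ`. -/
noncomputable def antiTw (ϑ ϑinv : H) : H →ₗ[k] H :=
  (LinearMap.mulRight k ϑ) ∘ₗ (LinearMap.mulLeft k ϑinv) ∘ₗ anti k H

variable (A : Type*) [Ring A] [Algebra k A]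

/-- `act` makes `A` a left `H`-module algebra:
`act` is a representation of `H`, `h•(ab) = Σ (h⁽¹⁾•a)(h⁽²⁾•b)` and `h•1 = ε(h)1`. -/
def IsModAlg (act : H →ₗ[k] Module.End k A) : Prop :=
  act 1 = 1 ∧ (∀ g h : H, act (g * h) = act g * act h) ∧
  (∀ (h : H) (a b : A),
    act h (a * b) = LinearMap.mul' k A ((pairAct k H act) (comulL k H h) (a ⊗ₜ b))) ∧
  (∀ h : H, act h 1 = (counitL k H h) • (1 : A))

/-- The adjoint-type action of `H` on `End_k(A)`: `h.X = Σ ρ(h⁽¹⁾) ∘ X ∘ ρ(γ(h⁽²⁾))`. -/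
noncomputable def dotAct (act : H →ₗ[k] Module.End k A) :
    H →ₗ[k] Module.End k A →ₗ[k] Module.End k A :=
  (sandwich k H (E := Module.End k A) act (act ∘ₗ anti k H)) ∘ₗ comulL k H

section Smash

variable (act : H →ₗ[k] Module.End k A)

/-- The linear endomorphism of `A ⊗ H` given by `b ⊗ l ↦ Σ (h⁽¹⁾ • b) ⊗ (h⁽²⁾ l)`
for a comultiplication-like map `δ`. -/
noncomputable def smashAct (δ : H →ₗ[k] H ⊗[k] H) : H →ₗ[k] (A ⊗[k] H →ₗ[k] A ⊗[k] H) :=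
  (TensorProduct.homTensorHomMap (RingHom.id k) A H A H) ∘ₗ
    (TensorProduct.map act (LinearMap.mul k H)) ∘ₗ δ

/-- The smash-product multiplication on `A ⊗ H` built from a left-multiplication-type map
`lA : A →ₗ (A⊗H →ₗ A⊗H)` and an action map `χ : H →ₗ (A⊗H →ₗ A⊗H)`:
`(a ⊗ h)·(b ⊗ l) = lA a (χ h (b ⊗ l))`. -/
noncomputable def smashMul (lA : A →ₗ[k] (A ⊗[k] H →ₗ[k] A ⊗[k] H))
    (χ : H →ₗ[k] (A ⊗[k] H →ₗ[k] A ⊗[k] H)) :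
    (A ⊗[k] H) →ₗ[k] (A ⊗[k] H) →ₗ[k] A ⊗[k] H :=
  TensorProduct.lift
    (((((LinearMap.llcomp k (A ⊗[k] H) (A ⊗[k] H) (A ⊗[k] H)) ∘ₗ lA).flip) ∘ₗ χ).flip)

section Representations

variable {k H A}

theorem TensorProduct.assoc_mul {B C D : Type*} [Ring B] [Ring C] [Ring D]
    [Algebra k B] [Algebra k C] [Algebra k D] (x y : (B ⊗[k] C) ⊗[k] D) :
    TensorProduct.assoc k B C D (x * y) =
      TensorProduct.assoc k B C D x * TensorProduct.assoc k B C D y :=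
  map_mul (Algebra.TensorProduct.assoc k k k B C D) x y

theorem cocycle_mul_one_tmul_comulTw (F Finv : H ⊗[k] H) (hinv : F * Finv = 1)
    (hcoc : TensorProduct.assoc k H H H (map (comulL k H) LinearMap.id F * (F ⊗ₜ 1)) =
      map LinearMap.id (comulL k H) F * ((1 : H) ⊗ₜ F))
    (h : H) :
    TensorProduct.assoc k H H H (map (comulL k H) LinearMap.id F * (F ⊗ₜ 1)) *
        (1 ⊗ₜ comulTw k H F Finv h) =
      map LinearMap.id (comulL k H) F * (1 ⊗ₜ (comulL k H h * F)) := by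
  have hconj : F * comulTw k H F Finv h = comulL k H h * F := by
    simp only [comulTw, LinearMap.comp_apply, LinearMap.mulLeft_apply, LinearMap.mulRight_apply,
      ← mul_assoc, hinv, one_mul]
  rw [hcoc, mul_assoc, Algebra.TensorProduct.tmul_mul_tmul, one_mul, hconj]

variable (ρ : H →ₐ[k] Module.End k A)

/-- The map `Ψ` of the header; `Φ = pairRep ρ F`. -/
def pairRep : H ⊗[k] H →ₐ[k] Module.End k (A ⊗[k] H) :=
  Module.endTensorEndAlgHom.comp (Algebra.TensorProduct.map ρ (Algebra.lmul k H))

@[simp]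
theorem pairRep_tmul_tmul (x y : H) (a : A) (m : H) :
    pairRep ρ (x ⊗ₜ y) (a ⊗ₜ m) = ρ x a ⊗ₜ (y * m) :=
  rfl

theorem homTensorHomMap_map_mul_eq_pairRep (X : H ⊗[k] H) :
    homTensorHomMap (RingHom.id k) A H A H (map ρ.toLinearMap (LinearMap.mul k H) X) =
      pairRep ρ X :=
  rfl

def tripleRep : H ⊗[k] (H ⊗[k] H) →ₐ[k] Module.End k (A ⊗[k] (A ⊗[k] H)) :=
  Module.endTensorEndAlgHom.comp (Algebra.TensorProduct.map ρ (pairRep ρ))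

@[simp]
theorem tripleRep_tmul_tmul (x : H) (Y : H ⊗[k] H) (a : A) (z : A ⊗[k] H) :
    tripleRep ρ (x ⊗ₜ Y) (a ⊗ₜ z) = ρ x a ⊗ₜ pairRep ρ Y z :=
  rfl

theorem tmul_pairRep (a : A) (Y : H ⊗[k] H) (z : A ⊗[k] H) :
    a ⊗ₜ pairRep ρ Y z = tripleRep ρ (1 ⊗ₜ Y) (a ⊗ₜ z) := by
  simp

variable (k H A) in
def leftMul : A ⊗[k] (A ⊗[k] H) →ₗ[k] A ⊗[k] H :=
  TensorProduct.lift ((LinearMap.rTensorHom H) ∘ₗ LinearMap.mul k A)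

@[simp]
theorem leftMul_tmul_tmul (a b : A) (m : H) :
    leftMul k H A (a ⊗ₜ (b ⊗ₜ m)) = (a * b) ⊗ₜ m :=
  rfl

theorem pairRep_leftMul
    (hmul : ∀ (h : H) (a b : A),
      ρ h (a * b) = LinearMap.mul' k A (pairAct k H ρ.toLinearMap (comulL k H h) (a ⊗ₜ b)))
    (Q : H ⊗[k] H) (Y : A ⊗[k] (A ⊗[k] H)) :
    pairRep ρ Q (leftMul k H A Y) =
      leftMul k H A
        (tripleRep ρ (TensorProduct.assoc k H H H (map (comulL k H) LinearMap.id Q)) Y) := by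
  induction Y using TensorProduct.induction_on with
  | zero => simp
  | add Y₁ Y₂ ih₁ ih₂ => simp only [map_add, ih₁, ih₂]
  | tmul a z =>
  induction z using TensorProduct.induction_on with
  | zero => simp
  | add z₁ z₂ ih₁ ih₂ => simp only [tmul_add, map_add, ih₁, ih₂]
  | tmul b m =>
  induction Q using TensorProduct.induction_on with
  | zero => simp
  | add Q₁ Q₂ ih₁ ih₂ => simp only [map_add, LinearMap.add_apply, ih₁, ih₂]
  | tmul x y =>
  rw [leftMul_tmul_tmul, pairRep_tmul_tmul, hmul, map_tmul, LinearMap.id_apply]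
  induction comulL k H x using TensorProduct.induction_on with
  | zero => simp
  | add S₁ S₂ ih₁ ih₂ => simp only [map_add, LinearMap.add_apply, add_tmul, ih₁, ih₂]
  | tmul s t => simp [pairAct]

theorem twistedLeftMul_apply (P : H ⊗[k] H) (a : A) (y : A ⊗[k] H) :
    ((LinearMap.rTensorHom H) ∘ₗ ((TensorProduct.mk k A A).compr₂
        ((LinearMap.mul' k A) ∘ₗ (pairAct k H ρ.toLinearMap) P))) a y =
      leftMul k H A (tripleRep ρ (TensorProduct.assoc k H H H (P ⊗ₜ 1)) (a ⊗ₜ y)) := by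
  induction y using TensorProduct.induction_on with
  | zero => simp
  | add y₁ y₂ ih₁ ih₂ => simp only [map_add, tmul_add, ih₁, ih₂]
  | tmul b m =>
  simp only [LinearMap.comp_apply, LinearMap.coe_rTensorHom, LinearMap.compr₂_apply, mk_apply,
    LinearMap.rTensor_tmul]
  induction P using TensorProduct.induction_on with
  | zero => simp
  | add P₁ P₂ ih₁ ih₂ => simp only [map_add, add_tmul, LinearMap.add_apply, ih₁, ih₂]
  | tmul x y => simp [pairAct]

theorem smashMul_tmul (lA : A →ₗ[k] (A ⊗[k] H →ₗ[k] A ⊗[k] H))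
    (χ : H →ₗ[k] (A ⊗[k] H →ₗ[k] A ⊗[k] H)) (a : A) (h : H) (y : A ⊗[k] H) :
    smashMul k H A lA χ (a ⊗ₜ h) y = lA a (χ h y) :=
  rfl

theorem smashAct_apply (δ : H →ₗ[k] H ⊗[k] H) (h : H) :
    smashAct k H A ρ.toLinearMap δ h = pairRep ρ (δ h) :=
  rfl

theorem pairRep_twistedSmashMul_tmul
    (hmul : ∀ (h : H) (a b : A),
      ρ h (a * b) = LinearMap.mul' k A (pairAct k H ρ.toLinearMap (comulL k H h) (a ⊗ₜ b)))
    (Q P : H ⊗[k] H) (δ : H →ₗ[k] H ⊗[k] H) (a : A) (h : H) (y : A ⊗[k] H) :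
    pairRep ρ Q (smashMul k H A
        ((LinearMap.rTensorHom H) ∘ₗ ((TensorProduct.mk k A A).compr₂
          ((LinearMap.mul' k A) ∘ₗ (pairAct k H ρ.toLinearMap) P)))
        (smashAct k H A ρ.toLinearMap δ) (a ⊗ₜ h) y) =
      leftMul k H A (tripleRep ρ
        (TensorProduct.assoc k H H H (map (comulL k H) LinearMap.id Q * (P ⊗ₜ 1)) *
          (1 ⊗ₜ δ h)) (a ⊗ₜ y)) := by
  rw [smashMul_tmul, twistedLeftMul_apply, smashAct_apply, tmul_pairRep, pairRep_leftMul ρ hmul,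
    TensorProduct.assoc_mul, map_mul, map_mul, mul_assoc]
  rfl

theorem smashMul_pairRep_tmul (Q R : H ⊗[k] H) (a : A) (h : H) (y : A ⊗[k] H) :
    smashMul k H A ((LinearMap.rTensorHom H) ∘ₗ (LinearMap.mul k A))
        (smashAct k H A ρ.toLinearMap (comulL k H)) (pairRep ρ Q (a ⊗ₜ h)) (pairRep ρ R y) =
      leftMul k H A (tripleRep ρ
        (map LinearMap.id (comulL k H) Q * (1 ⊗ₜ (comulL k H h * R))) (a ⊗ₜ y)) := by
  induction Q using TensorProduct.induction_on with
  | zero => simp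
  | add Q₁ Q₂ ih₁ ih₂ => simp only [map_add, LinearMap.add_apply, add_mul, ih₁, ih₂]
  | tmul x z =>
  have hcomul : comulL k H (z * h) = comulL k H z * comulL k H h :=
    Bialgebra.comul_mul (R := k) z h
  rw [pairRep_tmul_tmul, smashMul_tmul, smashAct_apply, hcomul, map_tmul,
    Algebra.TensorProduct.tmul_mul_tmul, mul_one, tripleRep_tmul_tmul, map_mul, map_mul,
    map_mul]
  rfl

theorem pairRep_apply_one_tmul_one (hunit : ∀ h : H, ρ h 1 = counitL k H h • (1 : A))
    (X : H ⊗[k] H) :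
    pairRep ρ X (1 ⊗ₜ 1) = 1 ⊗ₜ TensorProduct.lid k H (map (counitL k H) LinearMap.id X) := by
  induction X using TensorProduct.induction_on with
  | zero => simp
  | add X₁ X₂ ih₁ ih₂ => simp only [map_add, LinearMap.add_apply, tmul_add, ih₁, ih₂]
  | tmul x y => simp [hunit, smul_tmul]

theorem pairRep_bijective_of_isUnit {X : H ⊗[k] H} (hX : IsUnit X) :
    Function.Bijective (pairRep ρ X) :=
  (Module.End.isUnit_iff _).mp (hX.map (pairRep ρ))

end Representations

theorem smash_product_twist_iso
    (F Finv : H ⊗[k] H) (hF : IsCocycle k H F Finv)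
    (hact : IsModAlg k H A act) :
    Function.Bijective
      ((TensorProduct.homTensorHomMap (RingHom.id k) A H A H)
        ((TensorProduct.map act (LinearMap.mul k H)) F)) ∧
    (∀ x y : A ⊗[k] H,
      (TensorProduct.homTensorHomMap (RingHom.id k) A H A H)
          ((TensorProduct.map act (LinearMap.mul k H)) F)
        (smashMul k H A
          ((LinearMap.rTensorHom H) ∘ₗ
            ((TensorProduct.mk k A A).compr₂
              ((LinearMap.mul' k A) ∘ₗ (pairAct k H act) F)))
          (smashAct k H A act (comulTw k H F Finv)) x y)
      = smashMul k H A
          ((LinearMap.rTensorHom H) ∘ₗ (LinearMap.mul k A))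
          (smashAct k H A act (comulL k H))
          ((TensorProduct.homTensorHomMap (RingHom.id k) A H A H)
            ((TensorProduct.map act (LinearMap.mul k H)) F) x)
          ((TensorProduct.homTensorHomMap (RingHom.id k) A H A H)
            ((TensorProduct.map act (LinearMap.mul k H)) F) y)) ∧
    (TensorProduct.homTensorHomMap (RingHom.id k) A H A H)
        ((TensorProduct.map act (LinearMap.mul k H)) F)
      ((1 : A) ⊗ₜ (1 : H)) = (1 : A) ⊗ₜ (1 : H) := by
  obtain ⟨hFFinv, hFinvF, hcoc, hcounit, -⟩ := hF
  obtain ⟨ρ, rfl⟩ : ∃ ρ : H →ₐ[k] Module.End k A, ρ.toLinearMap = act :=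
    ⟨AlgHom.ofLinearMap act hact.1 hact.2.1, rfl⟩
  simp only [homTensorHomMap_map_mul_eq_pairRep]
  refine ⟨pairRep_bijective_of_isUnit ρ ⟨⟨F, Finv, hFFinv, hFinvF⟩, rfl⟩, fun x y => ?_, ?_⟩
  · induction x using TensorProduct.induction_on with
    | zero => simp
    | add x₁ x₂ ih₁ ih₂ => simp only [map_add, LinearMap.add_apply, ih₁, ih₂]
    | tmul a h =>
      rw [pairRep_twistedSmashMul_tmul ρ hact.2.2.1, smashMul_pairRep_tmul,
        cocycle_mul_one_tmul_comulTw F Finv hFFinv hcoc]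
  · rw [pairRep_apply_one_tmul_one ρ hact.2.2.2, hcounit]

end Smash

end
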